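/- The kernel of the ℂ-linear operator E1 = ∂x + (1/2)ξ3∂2 on R = ℂ[x,ξ2,ξ3] equals (as a ℂ-subspace of R) the ℂ-subalgebra of R generated by the two polynomials ξ3 and x·ξ3 − 2ξ2. In other words, the space of singular vectors of the s1-twisted Verma module M^{s1}(λ) for the subalgebra sl(2,ℂ) embedded on the first simple root of sl(3,ℂ) is ℂ[ξ3, x·ξ3 − 2ξ2]. -/

import Mathlib

open MvPolynomial

noncomputable section

/-- The polynomial algebra `R = ℂ[x,ξ2,ξ3]`
(variable `x` has index `0`, `ξ2` index `1`, `ξ3` index `2`). -/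
abbrev R3 : Type := MvPolynomial (Fin 3) ℂ

/-- Multiplication by the `i`-th variable as a `ℂ`-linear endomorphism of `R`. -/
def ξ (i : Fin 3) : Module.End ℂ R3 := LinearMap.mulLeft ℂ (X i)

/-- The partial derivative with respect to the `i`-th variable as a `ℂ`-linear endomorphism
of `R` (`D 0 = ∂x`, `D 1 = ∂2`, `D 2 = ∂3`). -/
def D (i : Fin 3) : Module.End ℂ R3 := (pderiv i).toLinearMap

/-- `E1 = ∂x + (1/2)ξ3∂2`, the image of the Chevalley generator `e1` in the
partial-Fourier-transformed realization of the `s1`-twisted Verma module. -/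
def E1 : Module.End ℂ R3 := D 0 + (1/2 : ℂ) • (ξ 2 * D 1)

/-!
The substitution `ξ2 ↦ x·ξ3 − 2ξ2` (fixing `x` and `ξ3`) is an algebra automorphism of `R`
that conjugates `∂x` into `E1`: both sides are derivations along it, and they agree on the
generators. Hence `ker E1` is the image of `ker ∂x = ℂ[ξ2, ξ3]`, the subalgebra generated by
the images `xξ3 − 2ξ2` and `ξ3` of `ξ2` and `ξ3`.
-/

namespace MvPolynomial

variable {σ R : Type*} [CommSemiring R]

theorem derivation_algHom_eq_of_forall_X {A : Type*} [CommSemiring A] [Algebra R A]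
    {δ : Derivation R A A} {δ' : Derivation R (MvPolynomial σ R) (MvPolynomial σ R)}
    {φ : MvPolynomial σ R →ₐ[R] A} (h : ∀ i, δ (φ (X i)) = φ (δ' (X i)))
    (p : MvPolynomial σ R) : δ (φ p) = φ (δ' p) := by
  induction p using MvPolynomial.induction_on with
  | C a =>
    rw [← algebraMap_eq, AlgHom.commutes, δ.map_algebraMap, δ'.map_algebraMap, map_zero]
  | add p q hp hq => simp only [map_add, hp, hq]
  | mul_X p i hp =>
    simp only [map_add, map_mul, Derivation.leibniz, smul_eq_mul, hp, h]

section CharZero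

variable [NoZeroDivisors R] [CharZero R]

theorem pderiv_eq_zero_iff_mem_supported {i : σ} {p : MvPolynomial σ R} :
    pderiv i p = 0 ↔ p ∈ supported R {i}ᶜ := by
  rw [mem_supported]
  refine ⟨fun hp j hj (hji : j = i) => ?_,
    fun hp => pderiv_eq_zero_of_notMem_vars fun hi => hp hi rfl⟩
  subst hji
  obtain ⟨d, hd, hdj⟩ := (mem_vars_iff_mem_support j).mp hj
  have hsplit : d - Finsupp.single j 1 + Finsupp.single j 1 = d :=
    tsub_add_cancel_of_le (Finsupp.single_le_iff.mpr (Nat.one_le_iff_ne_zero.mpr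
      (Finsupp.mem_support_iff.mp hdj)))
  have hcoeff := coeff_pderiv (i := j) p (d - Finsupp.single j 1)
  rw [hp, coeff_zero, hsplit, eq_comm] at hcoeff
  exact mem_support_iff.mp hd ((mul_eq_zero.mp hcoeff).resolve_right (by norm_cast))

theorem ker_pderiv (i : σ) :
    LinearMap.ker (pderiv i : Derivation R (MvPolynomial σ R) (MvPolynomial σ R)).toLinearMap =
      Subalgebra.toSubmodule (supported R {i}ᶜ) :=
  Submodule.ext fun _ => pderiv_eq_zero_iff_mem_supported

end CharZero

end MvPolynomial

theorem LinearMap.ker_eq_map_of_comp_eq {R M N M' N' : Type*} [Semiring R]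
    [AddCommMonoid M] [AddCommMonoid N] [AddCommMonoid M'] [AddCommMonoid N']
    [Module R M] [Module R N] [Module R M'] [Module R N']
    {e : M ≃ₗ[R] N} {e' : M' ≃ₗ[R] N'} {f : M →ₗ[R] M'} {g : N →ₗ[R] N'}
    (h : g ∘ₗ e = e' ∘ₗ f) :
    ker g = (ker f).map (e : M →ₗ[R] N) := by
  have hker : (ker g).comap (e : M →ₗ[R] N) = ker f := by
    rw [← ker_comp (e : M →ₗ[R] N), h, LinearEquiv.ker_comp]
  rw [← hker, Submodule.map_comap_eq_of_surjective e.surjective]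

@[simp]
theorem Derivation.map_ofNat {R A M : Type*} [CommSemiring R] [CommSemiring A] [Algebra R A]
    [AddCommMonoid M] [Module A M] [Module R M] (D : Derivation R A M) (n : ℕ) [n.AtLeastTwo] :
    D (ofNat(n) : A) = 0 :=
  D.map_natCast n

lemma C_half_mul_two : (C 2⁻¹ * 2 : R3) = 1 := by
  rw [← map_ofNat C, ← C_mul, inv_mul_cancel₀ two_ne_zero, C_1]

def rectifyE1 : R3 ≃ₐ[ℂ] R3 :=
  AlgEquiv.ofAlgHom (aeval ![X 0, X 0 * X 2 - 2 * X 1, X 2])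
    (aeval ![X 0, C 2⁻¹ * (X 0 * X 2 - X 1), X 2])
    (algHom_ext fun i => by
      fin_cases i <;> simp
      linear_combination X 1 * C_half_mul_two)
    (algHom_ext fun i => by
      fin_cases i <;> simp [map_ofNat]
      linear_combination (X 1 - X 0 * X 2) * C_half_mul_two)

@[simp] lemma rectifyE1_X0 : rectifyE1 (X 0) = X 0 := by simp [rectifyE1]
@[simp] lemma rectifyE1_X1 : rectifyE1 (X 1) = X 0 * X 2 - 2 * X 1 := by simp [rectifyE1]
@[simp] lemma rectifyE1_X2 : rectifyE1 (X 2) = X 2 := by simp [rectifyE1]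

def E1Derivation : Derivation ℂ R3 R3 := pderiv 0 + (C 2⁻¹ * X 2 : R3) • pderiv 1

lemma toLinearMap_E1Derivation : E1Derivation.toLinearMap = E1 := by
  ext p
  simp [E1, E1Derivation, D, ξ, smul_eq_C_mul, mul_assoc]

lemma E1Derivation_rectifyE1_X (i : Fin 3) :
    E1Derivation (rectifyE1 (X i)) = rectifyE1 (pderiv 0 (X i)) := by
  fin_cases i
  · simp [E1Derivation]
  · simp [E1Derivation]
    linear_combination -X 2 * C_half_mul_two
  · simp [E1Derivation]

lemma E1_comp_rectifyE1 :
    E1 ∘ₗ rectifyE1.toLinearEquiv = rectifyE1.toLinearEquiv ∘ₗ D 0 := by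
  rw [← toLinearMap_E1Derivation]
  exact LinearMap.ext (derivation_algHom_eq_of_forall_X (φ := rectifyE1.toAlgHom)
    E1Derivation_rectifyE1_X)

lemma rectifyE1_image_X_compl_zero :
    rectifyE1 '' (X '' ({0}ᶜ : Set (Fin 3))) = {X 2, X 0 * X 2 - 2 * X 1} := by
  have hcompl : ({0}ᶜ : Set (Fin 3)) = {1, 2} := by ext i; fin_cases i <;> simp
  rw [hcompl, Set.image_pair, Set.image_pair, rectifyE1_X1, rectifyE1_X2, Set.pair_comm]

/-- The space of `sl(2,ℂ)`-singular vectors of the `s1`-twisted Verma module `M^{s1}(λ)`,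
i.e. the kernel of `E1 = ∂x + (1/2)ξ3∂2` on `ℂ[x,ξ2,ξ3]`, is the `ℂ`-subalgebra
`ℂ[ξ3, x·ξ3 − 2ξ2]` generated by `ξ3` and `x·ξ3 − 2ξ2`. -/
theorem ker_E1_eq_adjoin :
    LinearMap.ker E1 =
      Subalgebra.toSubmodule
        (Algebra.adjoin ℂ ({X 2, X 0 * X 2 - 2 * X 1} : Set R3)) := by
  rw [LinearMap.ker_eq_map_of_comp_eq E1_comp_rectifyE1, D, ker_pderiv, supported_eq_adjoin_X,
    ← rectifyE1_image_X_compl_zero]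
  exact (congrArg Subalgebra.toSubmodule
    (Algebra.adjoin_image ℂ (rectifyE1 : R3 →ₐ[ℂ] R3) _)).symm
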